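/- The relation ≺ defined on the set T of Buchholz terms is a strict linear order (irreflexive, transitive, and total). -/
import Mathlib


inductive PT : Type
  | D : ℕ∞ → List PT → PT

mutual
  def PT.lt : PT → PT → Prop
    | .D u a, .D v b => u < v ∨ (u = v ∧ T.lt a b)
  def T.lt : List PT → List PT → Prop
    | _, [] => False
    | [], _ :: _ => True
    | a :: as, b :: bs => PT.lt a b ∨ (a = b ∧ T.lt as bs)
end

def PT.ord : PT → ℕ∞
  | .D u _ => u

def T.ord : List PT → ℕ∞
  | [] => 0
  | a :: _ => a.ord

mutual
theorem PT.lt_irrefl : ∀ a : PT, ¬ PT.lt a a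
  | .D u a, h => by
    rw [PT.lt] at h
    rcases h with h | ⟨_, h⟩
    · exact lt_irrefl _ h
    · exact T.lt_irrefl a h
theorem T.lt_irrefl : ∀ a : List PT, ¬ T.lt a a
  | [], h => h
  | a :: as, h => by
    rw [T.lt] at h
    rcases h with h | ⟨_, h⟩
    · exact PT.lt_irrefl a h
    · exact T.lt_irrefl as h
end

mutual
theorem PT.lt_trans : ∀ a b c : PT, PT.lt a b → PT.lt b c → PT.lt a c
  | .D u a, .D v b, .D w c, h1, h2 => by
    rw [PT.lt] at *
    rcases h1 with h1 | ⟨rfl, h1⟩ <;> rcases h2 with h2 | ⟨rfl, h2⟩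
    · exact Or.inl (h1.trans h2)
    · exact Or.inl h1
    · exact Or.inl h2
    · exact Or.inr ⟨rfl, T.lt_trans a b c h1 h2⟩
  termination_by a b c => sizeOf a + sizeOf b + sizeOf c
theorem T.lt_trans : ∀ a b c : List PT, T.lt a b → T.lt b c → T.lt a c
  | _, _, [], _, h2 => by simp [T.lt] at h2
  | _ :: _, [], _, h1, _ => False.elim h1
  | [], _ :: _, _ :: _, _, _ => by rw [T.lt]; trivial
  | a :: as, b :: bs, c :: cs, h1, h2 => by
    rw [T.lt] at *
    rcases h1 with h1 | ⟨rfl, h1⟩ <;> rcases h2 with h2 | ⟨rfl, h2⟩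
    · exact Or.inl (PT.lt_trans a b c h1 h2)
    · exact Or.inl h1
    · exact Or.inl h2
    · exact Or.inr ⟨rfl, T.lt_trans as bs cs h1 h2⟩
  termination_by a b c => sizeOf a + sizeOf b + sizeOf c
end

mutual
theorem PT.lt_total : ∀ a b : PT, PT.lt a b ∨ a = b ∨ PT.lt b a
  | .D u a, .D v b => by
    rcases lt_trichotomy u v with h | rfl | h
    · exact Or.inl (Or.inl h)
    · rcases T.lt_total a b with h | rfl | h
      · exact Or.inl (Or.inr ⟨rfl, h⟩)
      · exact Or.inr (Or.inl rfl)
      · exact Or.inr (Or.inr (Or.inr ⟨rfl, h⟩))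
    · exact Or.inr (Or.inr (Or.inl h))
  termination_by a b => sizeOf a + sizeOf b
theorem T.lt_total : ∀ a b : List PT, T.lt a b ∨ a = b ∨ T.lt b a
  | [], [] => Or.inr (Or.inl rfl)
  | [], _ :: _ => by left; rw [T.lt]; trivial
  | _ :: _, [] => by right; right; rw [T.lt]; trivial
  | a :: as, b :: bs => by
    rcases PT.lt_total a b with h | rfl | h
    · exact Or.inl (Or.inl h)
    · rcases T.lt_total as bs with h | rfl | h
      · exact Or.inl (Or.inr ⟨rfl, h⟩)
      · exact Or.inr (Or.inl rfl)
      · exact Or.inr (Or.inr (Or.inr ⟨rfl, h⟩))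
    · exact Or.inr (Or.inr (Or.inl h))
  termination_by a b => sizeOf a + sizeOf b
end

/-- The relation `≺` on Buchholz terms is a strict linear order:
irreflexive, transitive and total. -/
theorem prec_strict_linear_order :
    (∀ a : List PT, ¬ T.lt a a) ∧
    (∀ a b c : List PT, T.lt a b → T.lt b c → T.lt a c) ∧
    (∀ a b : List PT, T.lt a b ∨ a = b ∨ T.lt b a) := by
  exact ⟨T.lt_irrefl, T.lt_trans, T.lt_total⟩
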